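/- Let f : (0,1) → ℝ be square-integrable and suppose that x ↦ f(x)/(1−x) is also square-integrable on (0,1). Let c_k = (2k+1)·∫₀¹ f(x)·P̃_k(x) dx denote the Fourier–Legendre coefficients of f. Then for every integer n ≥ 0, ∫₀¹ (f(x)/(1−x))·P̃_n(x) dx = ∫₀¹ f(x)/(1−x) dx − 2·∑_{m=1}^{n} (1/m)·∑_{k=0}^{m−1} c_k. -/

import Mathlib

/-!
For the Legendre polynomials `Pₙ`, the Rodrigues formula gives the derivative recurrences
`P'ₙ₊₁ = X P'ₙ + (n+1) Pₙ` and `X P'ₙ₊₁ = P'ₙ + (n+1) Pₙ₊₁`.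
Adding them yields `∑_{k ≤ m} (2k+1) Pₖ = P'ₘ₊₁ + P'ₘ`, subtracting them yields
`(m+1) (Pₘ - Pₘ₊₁) = (1 - X) (P'ₘ₊₁ + P'ₘ)`, and telescoping gives the polynomial identity
`1 - Pₙ = (1 - X) ∑_{m=1}^n (1/m) ∑_{k<m} (2k+1) Pₖ`.
At `X = 2x - 1` the factor `1 - X = 2(1 - x)` cancels the denominator of `f(x)/(1 - x)`,
so `f(x)/(1-x) · (1 - P̃ₙ(x))` is a finite combination of the integrands `f P̃ₖ` of the
coefficients `cₖ`.
-/

open MeasureTheory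

/-- The `n`-th Legendre polynomial, via the Rodrigues formula
`P_n(x) = (1/(2ⁿ n!)) dⁿ/dxⁿ (x²-1)ⁿ`. -/
noncomputable def legendreP (n : ℕ) (x : ℝ) : ℝ :=
  (1 / ((2 : ℝ) ^ n * n.factorial)) * iteratedDeriv n (fun y : ℝ => (y ^ 2 - 1) ^ n) x

/-- The `n`-th shifted Legendre polynomial `P̃_n(x) = P_n(2x - 1)`. -/
noncomputable def shiftedLegendre (n : ℕ) (x : ℝ) : ℝ := legendreP n (2 * x - 1)

namespace Polynomial

open scoped Nat

section Rodrigues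

variable {R : Type*} [CommRing R]

lemma derivative_X_sq_sub_one_pow_succ (n : ℕ) :
    derivative ((X ^ 2 - 1) ^ (n + 1) : R[X]) =
      ((2 * (n + 1) : ℕ) : R[X]) * ((X ^ 2 - 1) ^ n * X) := by
  rw [derivative_pow, derivative_sub, derivative_X_sq, derivative_one, ← C_eq_natCast]
  simp only [map_ofNat, C_eq_natCast]
  push_cast
  ring

noncomputable def rodrigues (n : ℕ) : R[X] := derivative^[n] ((X ^ 2 - 1) ^ n)

lemma derivative_rodrigues_succ (n : ℕ) :
    derivative (rodrigues (n + 1) : R[X]) = ((2 * (n + 1) : ℕ) : R[X]) *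
      (X * derivative (rodrigues n) + ((n : R[X]) + 1) * rodrigues n) := by
  rw [rodrigues, rodrigues, ← Function.iterate_succ_apply' derivative, Function.iterate_succ_apply,
    derivative_X_sq_sub_one_pow_succ, iterate_derivative_natCast_mul, iterate_derivative_mul_X,
    Function.iterate_succ_apply']
  simp only [nsmul_eq_mul, Nat.add_sub_cancel]
  push_cast
  ring

lemma X_mul_derivative_rodrigues_succ (n : ℕ) :
    X * derivative (rodrigues (n + 1) : R[X]) = ((2 * (n + 1) : ℕ) : R[X]) *
      derivative (rodrigues n) + ((n : R[X]) + 1) * rodrigues (n + 1) := by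
  have h : derivative ((X ^ 2 - 1) ^ (n + 1) : R[X]) * X =
      ((2 * (n + 1) : ℕ) : R[X]) * ((X ^ 2 - 1) ^ (n + 1) + (X ^ 2 - 1) ^ n) := by
    rw [derivative_X_sq_sub_one_pow_succ]; ring
  have := congrArg (derivative^[n + 1]) h
  rw [iterate_derivative_derivative_mul_X, iterate_derivative_natCast_mul, iterate_map_add,
    Function.iterate_succ_apply' _ (n + 1), Function.iterate_succ_apply' _ n (_ ^ n)] at this
  simp only [nsmul_eq_mul] at this
  push_cast at this ⊢
  rw [rodrigues, rodrigues]
  linear_combination this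

end Rodrigues

section Legendre

variable (K : Type*) [Field K]

noncomputable def legendre (n : ℕ) : K[X] := C ((2 ^ n * n ! : K)⁻¹) * rodrigues n

variable {K}

@[simp] lemma legendre_zero : legendre K 0 = 1 := by
  simp [legendre, rodrigues]

variable [CharZero K]

lemma C_legendre_coeff_succ_mul (n : ℕ) :
    C ((2 ^ (n + 1) * (n + 1)! : K)⁻¹) * ((2 * (n + 1) : ℕ) : K[X]) = C ((2 ^ n * n ! : K)⁻¹) := by
  rw [← C_eq_natCast, ← C_mul, Nat.factorial_succ]
  congr 1
  have := n.factorial_ne_zero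
  push_cast
  field_simp
  ring

lemma derivative_legendre_succ (n : ℕ) : derivative (legendre K (n + 1)) =
    X * derivative (legendre K n) + ((n : K[X]) + 1) * legendre K n := by
  simp only [legendre, derivative_C_mul, derivative_rodrigues_succ, ← mul_assoc,
    C_legendre_coeff_succ_mul]
  ring

lemma X_mul_derivative_legendre_succ (n : ℕ) : X * derivative (legendre K (n + 1)) =
    derivative (legendre K n) + ((n : K[X]) + 1) * legendre K (n + 1) := by
  simp only [legendre, derivative_C_mul]
  rw [mul_left_comm, X_mul_derivative_rodrigues_succ, mul_add, ← mul_assoc,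
    C_legendre_coeff_succ_mul]
  ring

lemma sum_range_succ_mul_legendre (m : ℕ) :
    ∑ k ∈ Finset.range (m + 1), (2 * (k : K[X]) + 1) * legendre K k =
      derivative (legendre K (m + 1)) + derivative (legendre K m) := by
  induction m with
  | zero => simp [derivative_legendre_succ]
  | succ m ih =>
    rw [Finset.sum_range_succ, ih]
    have hA := derivative_legendre_succ (K := K) (m + 1)
    have hB := X_mul_derivative_legendre_succ (K := K) m
    push_cast at hA ⊢
    linear_combination -hA - hB

lemma succ_mul_legendre_sub_legendre_succ (m : ℕ) :
    ((m : K[X]) + 1) * (legendre K m - legendre K (m + 1)) =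
      (1 - X) * ∑ k ∈ Finset.range (m + 1), (2 * (k : K[X]) + 1) * legendre K k := by
  rw [sum_range_succ_mul_legendre]
  linear_combination X_mul_derivative_legendre_succ (K := K) m - derivative_legendre_succ (K := K) m

lemma one_sub_legendre (n : ℕ) : 1 - legendre K n = (1 - X) * ∑ m ∈ Finset.Icc 1 n,
    C (m⁻¹ : K) * ∑ k ∈ Finset.range m, (2 * (k : K[X]) + 1) * legendre K k := by
  induction n with
  | zero => simp
  | succ n ih =>
    have hC : C ((n + 1 : ℕ)⁻¹ : K) * ((n : K[X]) + 1) = 1 := by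
      rw [← C_eq_natCast, ← C_1, ← C_add, ← C_mul]
      congr 1
      push_cast
      field_simp
    rw [Finset.sum_Icc_succ_top (by omega), mul_add, ← ih, mul_left_comm,
      ← succ_mul_legendre_sub_legendre_succ]
    linear_combination (legendre K (n + 1) - legendre K n) * hC

end Legendre

end Polynomial

lemma iteratedDeriv_polynomial_eval {𝕜 : Type*} [NontriviallyNormedField 𝕜] (k : ℕ)
    (p : Polynomial 𝕜) :
    iteratedDeriv k (fun x => p.eval x) = fun x => (Polynomial.derivative^[k] p).eval x := by
  induction k generalizing p with
  | zero => simp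
  | succ k ih =>
    have hp : deriv (fun x => p.eval x) = fun x => p.derivative.eval x := funext fun _ => p.deriv
    rw [iteratedDeriv_succ', hp, ih, Function.iterate_succ_apply]

open Polynomial hiding shiftedLegendre in
lemma legendreP_eq_eval (n : ℕ) (x : ℝ) : legendreP n x = (legendre ℝ n).eval x := by
  have hu : (fun y : ℝ => (y ^ 2 - 1) ^ n) =
      fun y => (((X : Polynomial ℝ) ^ 2 - 1) ^ n).eval y := by
    simp
  rw [legendreP, hu, iteratedDeriv_polynomial_eval, legendre, rodrigues, eval_C_mul, one_div]

lemma continuous_shiftedLegendre (n : ℕ) : Continuous (shiftedLegendre n) := by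
  unfold shiftedLegendre
  simp only [legendreP_eq_eval]
  fun_prop

open Polynomial hiding shiftedLegendre in
lemma one_sub_shiftedLegendre (n : ℕ) (x : ℝ) :
    1 - shiftedLegendre n x = 2 * (1 - x) * ∑ m ∈ Finset.Icc 1 n,
      (1 / (m : ℝ)) * ∑ k ∈ Finset.range m, (2 * (k : ℝ) + 1) * shiftedLegendre k x := by
  have h := congrArg (eval (2 * x - 1)) (one_sub_legendre (K := ℝ) n)
  simp only [eval_sub, eval_one, eval_mul, eval_X, eval_finsetSum, eval_C, eval_add,
    eval_natCast, eval_ofNat] at h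
  simp only [shiftedLegendre, legendreP_eq_eval, one_div, h]
  ring

lemma integrableOn_mul_shiftedLegendre {g : ℝ → ℝ} (hg : IntegrableOn g (Set.Ioo 0 1)) (k : ℕ) :
    IntegrableOn (fun x => g x * shiftedLegendre k x) (Set.Ioo 0 1) :=
  hg.mul_continuousOn_of_subset (continuous_shiftedLegendre k).continuousOn measurableSet_Ioo
    isCompact_Icc Set.Ioo_subset_Icc_self

lemma div_one_sub_mul_one_sub_shiftedLegendre (f : ℝ → ℝ) (n : ℕ) {x : ℝ} (hx : x < 1) :
    f x / (1 - x) - f x / (1 - x) * shiftedLegendre n x = 2 * ∑ m ∈ Finset.Icc 1 n,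
      (1 / (m : ℝ)) * ∑ k ∈ Finset.range m, (2 * (k : ℝ) + 1) * (f x * shiftedLegendre k x) := by
  have hx' : 1 - x ≠ 0 := by linarith
  calc f x / (1 - x) - f x / (1 - x) * shiftedLegendre n x
      = f x / (1 - x) * (1 - shiftedLegendre n x) := by ring
    _ = 2 * (f x * ∑ m ∈ Finset.Icc 1 n, (1 / (m : ℝ)) *
          ∑ k ∈ Finset.range m, (2 * (k : ℝ) + 1) * shiftedLegendre k x) := by
        rw [one_sub_shiftedLegendre]
        field_simp
    _ = _ := by
        simp only [Finset.mul_sum]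
        exact Finset.sum_congr rfl fun m _ => Finset.sum_congr rfl fun k _ => by ring

/-- If `f` and `x ↦ f(x)/(1-x)` are square-integrable on `(0,1)` and
`c_k = (2k+1) ∫₀¹ f(x) P̃_k(x) dx` are the Fourier–Legendre coefficients of `f`, then for
every `n ≥ 0`,
`∫₀¹ (f(x)/(1-x)) P̃_n(x) dx = ∫₀¹ f(x)/(1-x) dx − 2 ∑_{m=1}^n (1/m) ∑_{k=0}^{m-1} c_k`. -/
theorem statement9 (f : ℝ → ℝ)
    (hf : MemLp f 2 (volume.restrict (Set.Ioo (0 : ℝ) 1)))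
    (hf2 : MemLp (fun x => f x / (1 - x)) 2 (volume.restrict (Set.Ioo (0 : ℝ) 1)))
    (c : ℕ → ℝ)
    (hc : ∀ k : ℕ, c k = (2 * (k : ℝ) + 1) * ∫ x in Set.Ioo (0 : ℝ) 1, f x * shiftedLegendre k x)
    (n : ℕ) :
    ∫ x in Set.Ioo (0 : ℝ) 1, (f x / (1 - x)) * shiftedLegendre n x =
      (∫ x in Set.Ioo (0 : ℝ) 1, f x / (1 - x))
        - 2 * ∑ m ∈ Finset.Icc 1 n, (1 / (m : ℝ)) * ∑ k ∈ Finset.range m, c k := by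
  have hF : IntegrableOn (fun x => f x / (1 - x)) (Set.Ioo 0 1) := hf2.integrable one_le_two
  have hfP := integrableOn_mul_shiftedLegendre (hf.integrable one_le_two)
  have hterm : ∀ m, IntegrableOn (fun x => ∑ k ∈ Finset.range m,
      (2 * (k : ℝ) + 1) * (f x * shiftedLegendre k x)) (Set.Ioo 0 1) := fun m =>
    integrable_finsetSum _ fun k _ => (hfP k).const_mul _
  calc ∫ x in Set.Ioo 0 1, f x / (1 - x) * shiftedLegendre n x
      = (∫ x in Set.Ioo 0 1, f x / (1 - x)) -
          ∫ x in Set.Ioo 0 1, (f x / (1 - x) - f x / (1 - x) * shiftedLegendre n x) := by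
        rw [integral_sub hF (integrableOn_mul_shiftedLegendre hF n)]
        ring
    _ = (∫ x in Set.Ioo 0 1, f x / (1 - x)) - ∫ x in Set.Ioo 0 1, 2 * ∑ m ∈ Finset.Icc 1 n,
          (1 / (m : ℝ)) * ∑ k ∈ Finset.range m,
            (2 * (k : ℝ) + 1) * (f x * shiftedLegendre k x) := by
        rw [setIntegral_congr_fun measurableSet_Ioo fun x hx =>
          div_one_sub_mul_one_sub_shiftedLegendre f n hx.2]
    _ = _ := by
        rw [integral_const_mul, integral_finsetSum _ fun m _ => (hterm m).const_mul _]
        simp only [integral_const_mul, integral_finsetSum _ fun k _ => (hfP k).const_mul _, hc]
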